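/- arXiv:2110.03922 — 9 statements merged into one kernel-verified Lean document; each statement's English description precedes it below -/
import Mathlib

section
/- Each diagonal entry of the learning transfer matrix T = Λ Φ (ΦᵀΛΦ + δI_n)⁻¹ Φᵀ lies in the interval [0, 1]. -/
/-!
Write `A = ΦᵀΛΦ + δI`, `φ` for the `i`-th row of `Φ`, `x = A⁻¹φ` and `t = φ ⬝ x`, so that
`Tᵢᵢ = λᵢ t`. Since `(Φx)ᵢ = t`, the quadratic form gives
`t = xᵀAx = ∑ⱼ λⱼ (Φx)ⱼ² + δ ‖x‖² ≥ λᵢ t²`, which forces `t ≥ 0` and `λᵢ t ≤ 1`.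
-/

open Matrix

theorem mul_mem_Icc_of_mul_sq_le {R : Type*} [CommRing R] [LinearOrder R] [IsStrictOrderedRing R]
    {a t : R} (ha : 0 ≤ a) (h : a * t ^ 2 ≤ t) : a * t ∈ Set.Icc 0 1 := by
  have ht : 0 ≤ t := (mul_nonneg ha (sq_nonneg t)).trans h
  refine ⟨mul_nonneg ha ht, ?_⟩
  rcases ht.eq_or_lt with rfl | ht
  · simp
  · exact le_of_mul_le_mul_right (by linarith) ht

namespace Matrix

variable {m n R : Type*} [Fintype m] [Fintype n]

theorem diagonal_mul_mul_mul_transpose_apply_self [CommSemiring R] [DecidableEq m]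
    (d : m → R) (Φ : Matrix m n R) (B : Matrix n n R) (i : m) :
    (diagonal d * Φ * B * Φᵀ) i i = d i * (Φ i ⬝ᵥ (B *ᵥ Φ i)) := by
  rw [Matrix.mul_assoc, Matrix.mul_assoc, diagonal_mul]
  rfl

theorem dotProduct_inv_mulVec_eq [CommRing R] [DecidableEq n] {A : Matrix n n R}
    (hA : IsUnit A.det) (v : n → R) :
    v ⬝ᵥ (A⁻¹ *ᵥ v) = (A⁻¹ *ᵥ v) ⬝ᵥ (A *ᵥ (A⁻¹ *ᵥ v)) := by
  rw [mulVec_mulVec, mul_nonsing_inv A hA, one_mulVec, dotProduct_comm]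

theorem dotProduct_transpose_mul_diagonal_mul_mulVec [CommSemiring R] [DecidableEq m]
    (d : m → R) (Φ : Matrix m n R) (x : n → R) :
    x ⬝ᵥ ((Φᵀ * diagonal d * Φ) *ᵥ x) = ∑ j, d j * (Φ *ᵥ x) j ^ 2 := by
  rw [← mulVec_mulVec, ← mulVec_mulVec, dotProduct_mulVec, vecMul_transpose]
  simp only [dotProduct, mulVec_diagonal]
  exact Finset.sum_congr rfl fun j _ => by ring

theorem mul_sq_le_dotProduct_mulVec [CommRing R] [LinearOrder R] [IsStrictOrderedRing R]
    [DecidableEq m] [DecidableEq n]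
    {d : m → R} (hd : ∀ j, 0 ≤ d j) (Φ : Matrix m n R) {δ : R} (hδ : 0 ≤ δ) (x : n → R) (i : m) :
    d i * (Φ *ᵥ x) i ^ 2 ≤ x ⬝ᵥ ((Φᵀ * diagonal d * Φ + δ • 1) *ᵥ x) := by
  rw [add_mulVec, dotProduct_add, dotProduct_transpose_mul_diagonal_mul_mulVec, smul_mulVec,
    one_mulVec, dotProduct_smul, smul_eq_mul]
  have hsum : d i * (Φ *ᵥ x) i ^ 2 ≤ ∑ j, d j * (Φ *ᵥ x) j ^ 2 :=
    Finset.single_le_sum (fun j _ => mul_nonneg (hd j) (sq_nonneg _)) (Finset.mem_univ i)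
  have hδx : 0 ≤ δ * (x ⬝ᵥ x) :=
    mul_nonneg hδ (Finset.sum_nonneg fun j _ => mul_self_nonneg (x j))
  linarith

end Matrix

theorem transfer_matrix_diag_mem_Icc
    (M n : ℕ)
    (lam : Fin M → ℝ) (hpos : ∀ i, 0 < lam i)
    (Φ : Matrix (Fin M) (Fin n) ℝ)
    (δ : ℝ) (hδ : 0 ≤ δ)
    (hinv : IsUnit (Φᵀ * Matrix.diagonal lam * Φ + δ • (1 : Matrix (Fin n) (Fin n) ℝ)))
    (i : Fin M) :
    (Matrix.diagonal lam * Φ *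
        (Φᵀ * Matrix.diagonal lam * Φ + δ • (1 : Matrix (Fin n) (Fin n) ℝ))⁻¹ * Φᵀ) i i
      ∈ Set.Icc (0 : ℝ) 1 := by
  set A := Φᵀ * diagonal lam * Φ + δ • (1 : Matrix (Fin n) (Fin n) ℝ)
  set x := A⁻¹ *ᵥ Φ i
  rw [diagonal_mul_mul_mul_transpose_apply_self]
  refine mul_mem_Icc_of_mul_sq_le (hpos i).le ?_
  calc lam i * (Φ i ⬝ᵥ x) ^ 2 = lam i * (Φ *ᵥ x) i ^ 2 := rfl
    _ ≤ x ⬝ᵥ (A *ᵥ x) := mul_sq_le_dotProduct_mulVec (fun j => (hpos j).le) Φ hδ x i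
    _ = Φ i ⬝ᵥ x := (dotProduct_inv_mulVec_eq ((isUnit_iff_isUnit_det A).mp hinv) _).symm
end

section
/- For i ≠ j, the partial derivative of T_{jj} with respect to λᵢ is nonpositive: ∂T_{jj}/∂λᵢ = −λⱼ (φⱼᵀ K⁻¹ φᵢ)² ≤ 0, where T = Λ Φ (ΦᵀΛΦ + δI_n)⁻¹ Φᵀ, K = ΦᵀΛΦ + δI_n, and φᵢᵀ denotes the i-th row of Φ. -/
open Matrix

private lemma my_mul_vecMulVec {n : ℕ} (A : Matrix (Fin n) (Fin n) ℝ) (u v : Fin n → ℝ) :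
    A * vecMulVec u v = vecMulVec (A *ᵥ u) v := by
  ext a b
  simp [mul_apply, vecMulVec_apply, mulVec, dotProduct, Finset.sum_mul, mul_assoc]

private lemma my_vecMulVec_mul {n : ℕ} (A : Matrix (Fin n) (Fin n) ℝ) (u v : Fin n → ℝ) :
    vecMulVec u v * A = vecMulVec u (v ᵥ* A) := by
  ext a b
  simp [mul_apply, vecMulVec_apply, vecMul, dotProduct, Finset.mul_sum, mul_assoc]

private lemma my_vecMulVec_mulVec {n : ℕ} (u v w : Fin n → ℝ) :
    vecMulVec u v *ᵥ w = (v ⬝ᵥ w) • u := by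
  ext a
  simp [vecMulVec_apply, mulVec, dotProduct, Finset.sum_mul, Finset.mul_sum, mul_assoc,
    mul_comm, mul_left_comm]

private lemma my_vecMulVec_vecMul {n : ℕ} (u v w : Fin n → ℝ) :
    w ᵥ* vecMulVec u v = (w ⬝ᵥ u) • v := by
  ext a
  simp [vecMulVec_apply, vecMul, dotProduct, Finset.sum_mul, Finset.mul_sum, mul_assoc,
    mul_comm, mul_left_comm]

private lemma my_entry_formula {n m : ℕ} (v : Fin m → ℝ) (Φ : Matrix (Fin m) (Fin n) ℝ)
    (X : Matrix (Fin n) (Fin n) ℝ) (j : Fin m) :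
    (Matrix.diagonal v * Φ * X * Φᵀ) j j = v j * (Φ j ⬝ᵥ (X *ᵥ Φ j)) := by
  simp only [mul_apply, transpose_apply, mulVec, dotProduct, Finset.mul_sum,
    Finset.sum_mul, diagonal_apply, ite_mul, zero_mul, Finset.sum_ite_eq,
    Finset.mem_univ, if_true]
  rw [Finset.sum_comm]
  exact Finset.sum_congr rfl fun a _ => Finset.sum_congr rfl fun b _ => by ring

private lemma my_diag_update {n m : ℕ} (lam : Fin m → ℝ) (i : Fin m) (t : ℝ)
    (Φ : Matrix (Fin m) (Fin n) ℝ) (δ : ℝ) :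
    Φᵀ * Matrix.diagonal (Function.update lam i t) * Φ + δ • (1 : Matrix (Fin n) (Fin n) ℝ)
      = (Φᵀ * Matrix.diagonal lam * Φ + δ • (1 : Matrix (Fin n) (Fin n) ℝ))
        + (t - lam i) • vecMulVec (Φ i) (Φ i) := by
  ext a b
  simp only [Matrix.add_apply, mul_apply, diagonal_apply, transpose_apply,
    Matrix.smul_apply, vecMulVec_apply, smul_eq_mul, ite_mul, mul_ite, zero_mul, mul_zero,
    Finset.sum_ite_eq, Finset.sum_ite_eq', Finset.mem_univ, if_true]
  have key : ∀ k : Fin m, Φ k a * Function.update lam i t k * Φ k b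
      = Φ k a * lam k * Φ k b + (if k = i then (t - lam i) * (Φ i a * Φ i b) else 0) := by
    intro k
    by_cases hk : k = i
    · subst hk; simp [Function.update_self]; ring
    · simp [Function.update_of_ne hk, hk]
  rw [Finset.sum_congr rfl fun k _ => key k, Finset.sum_add_distrib, Finset.sum_ite_eq',
    if_pos (Finset.mem_univ i)]
  ring

theorem transfer_matrix_deriv_other_eigenvalue_nonpos
    (M n : ℕ)
    (lam : Fin M → ℝ) (hpos : ∀ k, 0 < lam k)
    (Φ : Matrix (Fin M) (Fin n) ℝ)
    (δ : ℝ) (hδ : 0 ≤ δ)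
    (i j : Fin M) (hij : i ≠ j)
    (hK : (Φᵀ * Matrix.diagonal lam * Φ + δ • (1 : Matrix (Fin n) (Fin n) ℝ)).PosDef) :
    let K := Φᵀ * Matrix.diagonal lam * Φ + δ • (1 : Matrix (Fin n) (Fin n) ℝ)
    HasDerivAt
      (fun t : ℝ =>
        (Matrix.diagonal (Function.update lam i t) * Φ *
          (Φᵀ * Matrix.diagonal (Function.update lam i t) * Φ
            + δ • (1 : Matrix (Fin n) (Fin n) ℝ))⁻¹ * Φᵀ) j j)
      (-(lam j) * (Φ j ⬝ᵥ (K⁻¹ *ᵥ Φ i))^2) (lam i)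
    ∧ -(lam j) * (Φ j ⬝ᵥ (K⁻¹ *ᵥ Φ i))^2 ≤ 0 := by
  intro K
  have hKdef : K = Φᵀ * Matrix.diagonal lam * Φ + δ • (1 : Matrix (Fin n) (Fin n) ℝ) := rfl
  have hdet : IsUnit K.det := isUnit_iff_ne_zero.mpr hK.det_pos.ne'
  have hKsym : Kᵀ = K := by
    rw [hKdef]
    simp [transpose_add, transpose_smul, transpose_mul, Matrix.mul_assoc,
      diagonal_transpose]
  have hinv_sym : K⁻¹ᵀ = K⁻¹ := by rw [Matrix.transpose_nonsing_inv, hKsym]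
  set φ : Fin n → ℝ := Φ i with hφ
  set u : Fin n → ℝ := K⁻¹ *ᵥ φ with hu
  set c : ℝ := φ ⬝ᵥ u with hc
  set b : ℝ := Φ j ⬝ᵥ u with hb
  set a : ℝ := Φ j ⬝ᵥ (K⁻¹ *ᵥ Φ j) with ha
  -- Sherman–Morrison
  have hvm : φ ᵥ* K⁻¹ = u := by
    rw [hu, ← Matrix.mulVec_transpose, hinv_sym]
  have sherman : ∀ t : ℝ, 1 + (t - lam i) * c ≠ 0 →
      (K + (t - lam i) • vecMulVec φ φ)⁻¹
        = K⁻¹ - ((t - lam i) / (1 + (t - lam i) * c)) • vecMulVec u u := by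
    intro t ht
    set s : ℝ := t - lam i with hs
    set r : ℝ := s / (1 + s * c) with hr
    apply Matrix.inv_eq_right_inv
    have hKu : K *ᵥ u = φ := by
      rw [hu, Matrix.mulVec_mulVec, Matrix.mul_nonsing_inv _ hdet, Matrix.one_mulVec]
    have e1 : K * vecMulVec u u = vecMulVec φ u := by rw [my_mul_vecMulVec, hKu]
    have e2 : vecMulVec φ φ * K⁻¹ = vecMulVec φ u := by rw [my_vecMulVec_mul, hvm]
    have e3 : vecMulVec φ φ * vecMulVec u u = c • vecMulVec φ u := by
      rw [my_vecMulVec_mul, my_vecMulVec_vecMul, hc]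
      ext p q; simp [vecMulVec_apply, smul_eq_mul]; ring
    have expand : (K + s • vecMulVec φ φ) * (K⁻¹ - r • vecMulVec u u)
        = 1 + (s - r * (1 + s * c)) • vecMulVec φ u := by
      rw [Matrix.add_mul, Matrix.mul_sub, Matrix.mul_sub, Matrix.mul_smul,
        Matrix.smul_mul, Matrix.mul_smul, Matrix.mul_nonsing_inv _ hdet, e1, e2,
        Matrix.smul_mul, e3]
      module
    rw [expand]
    have : s - r * (1 + s * c) = 0 := by
      rw [hr]; field_simp; ring
    rw [this, zero_smul, add_zero]
  -- the local formula for the entry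
  have hEq : ∀ t : ℝ, 1 + (t - lam i) * c ≠ 0 →
      (Matrix.diagonal (Function.update lam i t) * Φ *
          (Φᵀ * Matrix.diagonal (Function.update lam i t) * Φ
            + δ • (1 : Matrix (Fin n) (Fin n) ℝ))⁻¹ * Φᵀ) j j
        = lam j * a - lam j * ((t - lam i) * b ^ 2 / (1 + (t - lam i) * c)) := by
    intro t ht
    rw [my_entry_formula, my_diag_update, ← hKdef, sherman t ht,
      Function.update_of_ne (Ne.symm hij)]
    rw [Matrix.sub_mulVec, Matrix.smul_mulVec, my_vecMulVec_mulVec,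
      dotProduct_sub, ← ha]
    rw [dotProduct_smul, smul_eq_mul, dotProduct_smul, smul_eq_mul]
    rw [dotProduct_comm u (Φ j), ← hb]
    ring
  -- the model function has the required derivative
  have h1 : HasDerivAt (fun t : ℝ => t - lam i) 1 (lam i) :=
    (hasDerivAt_id _).sub_const _
  have hnum : HasDerivAt (fun t : ℝ => (t - lam i) * b ^ 2) (b ^ 2) (lam i) := by
    simpa using h1.mul_const (b ^ 2)
  have hden : HasDerivAt (fun t : ℝ => 1 + (t - lam i) * c) c (lam i) := by
    simpa using (h1.mul_const c).const_add 1
  have hd0 : 1 + (lam i - lam i) * c ≠ 0 := by simp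
  have hdiv := hnum.div hden hd0
  have hmodel : HasDerivAt
      (fun t : ℝ => lam j * a - lam j * ((t - lam i) * b ^ 2 / (1 + (t - lam i) * c)))
      (-(lam j) * b ^ 2) (lam i) := by
    have := (hdiv.const_mul (lam j)).const_sub (lam j * a)
    exact this.congr_deriv (by simp)
  -- eventual equality
  have hev : ∀ᶠ t in nhds (lam i), 1 + (t - lam i) * c ≠ 0 := by
    have hcont : Continuous fun t : ℝ => 1 + (t - lam i) * c := by continuity
    exact (hcont.continuousAt (x := lam i)).eventually_ne (by simp)
  have hfeq : (fun t : ℝ =>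
        (Matrix.diagonal (Function.update lam i t) * Φ *
          (Φᵀ * Matrix.diagonal (Function.update lam i t) * Φ
            + δ • (1 : Matrix (Fin n) (Fin n) ℝ))⁻¹ * Φᵀ) j j)
      =ᶠ[nhds (lam i)]
      (fun t : ℝ => lam j * a - lam j * ((t - lam i) * b ^ 2 / (1 + (t - lam i) * c))) :=
    hev.mono fun t ht => hEq t ht
  constructor
  · exact hmodel.congr_of_eventuallyEq hfeq
  · nlinarith [sq_nonneg (Φ j ⬝ᵥ (K⁻¹ *ᵥ Φ i)), (hpos j).le,
      mul_nonneg (hpos j).le (sq_nonneg (Φ j ⬝ᵥ (K⁻¹ *ᵥ Φ i)))]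
end

section
/- The derivative of the diagonal entry T_{ii} of T = Λ Φ (ΦᵀΛΦ + δI_n)⁻¹ Φᵀ with respect to the ridge parameter δ is nonpositive: ∂T_{ii}/∂δ = −λᵢ eᵢᵀ Φ K⁻² Φᵀ eᵢ ≤ 0, where K = ΦᵀΛΦ + δI_n. -/
open Matrix

attribute [local instance] Matrix.linftyOpNormedRing Matrix.linftyOpNormedAlgebra

theorem transfer_matrix_deriv_ridge_nonpos
    (M n : ℕ)
    (lam : Fin M → ℝ) (hpos : ∀ k, 0 < lam k)
    (Φ : Matrix (Fin M) (Fin n) ℝ)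
    (δ : ℝ) (hδ : 0 ≤ δ)
    (i : Fin M)
    (hK : (Φᵀ * Matrix.diagonal lam * Φ + δ • (1 : Matrix (Fin n) (Fin n) ℝ)).PosDef) :
    let K := Φᵀ * Matrix.diagonal lam * Φ + δ • (1 : Matrix (Fin n) (Fin n) ℝ)
    HasDerivAt
      (fun d : ℝ =>
        (Matrix.diagonal lam * Φ *
          (Φᵀ * Matrix.diagonal lam * Φ + d • (1 : Matrix (Fin n) (Fin n) ℝ))⁻¹ * Φᵀ) i i)
      (-(lam i) * (Φ i ⬝ᵥ ((K⁻¹ * K⁻¹) *ᵥ Φ i))) δ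
    ∧ -(lam i) * (Φ i ⬝ᵥ ((K⁻¹ * K⁻¹) *ᵥ Φ i)) ≤ 0 := by
  intro K
  set A : Matrix (Fin n) (Fin n) ℝ := Φᵀ * Matrix.diagonal lam * Φ with hA
  have hKdef : K = A + δ • (1 : Matrix (Fin n) (Fin n) ℝ) := rfl
  -- K is a unit
  have hunit : IsUnit K := (Matrix.isUnit_iff_isUnit_det K).mpr
    (isUnit_iff_ne_zero.mpr hK.det_pos.ne')
  -- the derivative statement
  have hsym : Kᵀ = K := by
    rw [hKdef, Matrix.transpose_add, Matrix.transpose_smul, Matrix.transpose_one, hA]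
    congr 1
    rw [Matrix.transpose_mul, Matrix.transpose_mul, Matrix.transpose_transpose,
      Matrix.diagonal_transpose, Matrix.mul_assoc]
  constructor
  · -- derivative of d ↦ A + d • 1, as a function into matrices
    have h1 : HasDerivAt (fun d : ℝ => A + d • (1 : Matrix (Fin n) (Fin n) ℝ))
        (1 : Matrix (Fin n) (Fin n) ℝ) δ := by
      exact (((hasDerivAt_id δ).smul_const (1 : Matrix (Fin n) (Fin n) ℝ)).const_add A).congr_deriv (one_smul ℝ _)
    -- derivative of Ring.inverse at the unit K
    obtain ⟨u, hu⟩ := hunit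
    have hinv : HasDerivAt (fun d : ℝ =>
        Ring.inverse (A + d • (1 : Matrix (Fin n) (Fin n) ℝ)))
        (-(K⁻¹ * K⁻¹)) δ := by
      have h2 := (hasFDerivAt_ringInverse (𝕜 := ℝ) u)
      rw [hu] at h2
      have h3 := h2.comp_hasDerivAt δ h1
      refine h3.congr_deriv (Eq.symm ?_)
      have hcoe : (↑u⁻¹ : Matrix (Fin n) (Fin n) ℝ) = K⁻¹ := by
        rw [Matrix.nonsing_inv_eq_ringInverse, ← hu, Ring.inverse_unit]
      simp [hcoe]
    -- apply the continuous linear map B ↦ (diagonal lam * Φ * B * Φᵀ) i i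
    let L : Matrix (Fin n) (Fin n) ℝ →ₗ[ℝ] ℝ :=
      { toFun := fun B => (Matrix.diagonal lam * Φ * B * Φᵀ) i i
        map_add' := fun B C => by
          simp [Matrix.mul_add, Matrix.add_mul, Matrix.add_apply]
        map_smul' := fun c B => by
          simp [Matrix.mul_smul, Matrix.smul_mul, Matrix.smul_apply] }
    have hL := L.toContinuousLinearMap.hasFDerivAt.comp_hasDerivAt δ hinv
    have heq : (fun d : ℝ =>
        (Matrix.diagonal lam * Φ *
          (Φᵀ * Matrix.diagonal lam * Φ + d • (1 : Matrix (Fin n) (Fin n) ℝ))⁻¹ * Φᵀ) i i)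
        = fun d => L.toContinuousLinearMap
          (Ring.inverse (A + d • (1 : Matrix (Fin n) (Fin n) ℝ))) := by
      funext d
      simp [L, ← Matrix.nonsing_inv_eq_ringInverse, hA]
    rw [heq]
    refine hL.congr_deriv (Eq.symm ?_)
    show -(lam i) * (Φ i ⬝ᵥ ((K⁻¹ * K⁻¹) *ᵥ Φ i))
        = (Matrix.diagonal lam * Φ * -(K⁻¹ * K⁻¹) * Φᵀ) i i
    simp only [Matrix.mul_neg, Matrix.neg_mul, Matrix.neg_apply]
    rw [neg_mul, neg_inj]
    simp [Matrix.mul_apply, Matrix.mulVec, dotProduct, Matrix.diagonal,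
      Finset.mul_sum, Finset.sum_mul]
    rw [Finset.sum_comm]
    refine Finset.sum_congr rfl fun j _ => Finset.sum_congr rfl fun k _ =>
      Finset.sum_congr rfl fun x _ => by ring
  · -- nonpositivity
    have hKinv_sym : (K⁻¹)ᵀ = K⁻¹ := by
      rw [Matrix.transpose_nonsing_inv, hsym]
    have : Φ i ⬝ᵥ ((K⁻¹ * K⁻¹) *ᵥ Φ i)
        = (K⁻¹ *ᵥ Φ i) ⬝ᵥ (K⁻¹ *ᵥ Φ i) := by
      rw [← Matrix.mulVec_mulVec, Matrix.dotProduct_mulVec, ← Matrix.mulVec_transpose,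
        hKinv_sym]
    rw [this, neg_mul]
    refine neg_nonpos_of_nonneg (mul_nonneg (hpos i).le ?_)
    exact Finset.sum_nonneg fun j _ => mul_self_nonneg _
end

section
/- Adding a data point cannot decrease eigenfunction learnability: if T = Λ^{1/2} (Λ^{1/2} Φ Φᵀ Λ^{1/2})(Λ^{1/2} Φ Φᵀ Λ^{1/2})⁺ Λ^{−1/2} and T⁺ is the same expression with ΦΦᵀ replaced by ΦΦᵀ + ξξᵀ for a vector ξ orthogonal to the columns of Φ, then T⁺_{ii} ≥ T_{ii} for every i. -/
/-!
Conjugation by `Λ^{1/2}` and `Λ^{-1/2}` multiplies the `i`-th diagonal entry by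
`√λᵢ · (√λᵢ)⁻¹ ≥ 0`, so it suffices to compare the orthogonal projections `P = A A⁺` and
`P' = A' A'⁺` onto the ranges of `A` and `A'`. Since `0 ≤ A ≤ A'` in the Loewner order,
`ker A' ⊆ ker A`, i.e. `range A ⊆ range A'`, so `P' P = P`. Then `P' - P` is again an orthogonal
projection, hence positive semidefinite, and its diagonal is nonnegative.
-/

open Matrix

/-- `G` satisfies the four Penrose conditions for `A`, i.e. `G = A⁺`. -/
def IsMoorePenroseInv {m : Type*} [Fintype m] [DecidableEq m]
    (A G : Matrix m m ℝ) : Prop :=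
  A * G * A = A ∧ G * A * G = G ∧ (A * G)ᵀ = A * G ∧ (G * A)ᵀ = G * A

open scoped MatrixOrder ComplexOrder

namespace Matrix

theorem diagonal_mul_mul_diagonal_apply {m n α : Type*} [Fintype m] [Fintype n] [DecidableEq m]
    [DecidableEq n] [NonUnitalNonAssocSemiring α] (d : m → α) (e : n → α) (X : Matrix m n α)
    (i : m) (j : n) : (diagonal d * X * diagonal e) i j = d i * X i j * e j := by
  rw [mul_diagonal, diagonal_mul]

variable {m l 𝕜 : Type*} [Fintype m] [Fintype l] [RCLike 𝕜]

theorem mulVec_eq_zero_of_le_of_mulVec_eq_zero {A B : Matrix m m 𝕜} (hA : 0 ≤ A) (hAB : A ≤ B)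
    {x : m → 𝕜} (hx : B *ᵥ x = 0) : A *ᵥ x = 0 := by
  rw [← hA.posSemidef.dotProduct_mulVec_zero_iff]
  have hsum : star x ⬝ᵥ A *ᵥ x + star x ⬝ᵥ (B - A) *ᵥ x = 0 := by
    rw [← dotProduct_add, ← add_mulVec, add_sub_cancel, hx, dotProduct_zero]
  exact ((add_eq_zero_iff_of_nonneg (hA.posSemidef.dotProduct_mulVec_nonneg x)
    ((le_iff.1 hAB).dotProduct_mulVec_nonneg x)).1 hsum).1

theorem mul_eq_zero_of_le_of_mul_eq_zero {A B : Matrix m m 𝕜} (hA : 0 ≤ A) (hAB : A ≤ B)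
    {X : Matrix m l 𝕜} (hX : B * X = 0) : A * X = 0 :=
  ext_iff_mulVec.2 fun v => by
    rw [← mulVec_mulVec, zero_mulVec]
    exact mulVec_eq_zero_of_le_of_mulVec_eq_zero hA hAB (by rw [mulVec_mulVec, hX, zero_mulVec])

theorem diag_nonneg_of_isStarProjection {P : Matrix m m 𝕜}
    (hP : IsStarProjection P) (i : m) : 0 ≤ P i i :=
  hP.nonneg.posSemidef.diag_nonneg

end Matrix

namespace IsMoorePenroseInv

variable {m : Type*} [Fintype m] [DecidableEq m] {A G A' G' : Matrix m m ℝ}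

theorem isStarProjection_mul (h : IsMoorePenroseInv A G) : IsStarProjection (A * G) where
  isIdempotentElem := by rw [IsIdempotentElem, ← mul_assoc, h.1]
  isSelfAdjoint := by
    rw [IsSelfAdjoint, star_eq_conjTranspose, conjTranspose_eq_transpose_of_trivial, h.2.2.1]

theorem mul_mul_eq_of_isSymm (h : IsMoorePenroseInv A G) (hA : A.IsSymm) : A * (A * G) = A :=
  calc A * (A * G) = (A * G * A)ᵀ := by rw [transpose_mul, h.2.2.1, hA.eq]
    _ = A := by rw [h.1, hA.eq]

theorem mul_mul_eq_of_le (h' : IsMoorePenroseInv A' G') (hA : 0 ≤ A) (hAA' : A ≤ A') :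
    A' * G' * A = A := by
  have hA'symm : A'.IsSymm := isHermitian_iff_isSymm.1 (hA.trans hAA').posSemidef.isHermitian
  have hAsymm : A.IsSymm := isHermitian_iff_isSymm.1 hA.posSemidef.isHermitian
  have hAP' : A * (A' * G') = A := by
    have := mul_eq_zero_of_le_of_mul_eq_zero hA hAA' (X := 1 - A' * G')
      (by rw [mul_sub, mul_one, h'.mul_mul_eq_of_isSymm hA'symm, sub_self])
    rwa [mul_sub, mul_one, sub_eq_zero, eq_comm] at this
  rw [← hAsymm.eq, ← h'.2.2.1, ← transpose_mul, hAP']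

end IsMoorePenroseInv

theorem learnability_monotone_in_data_general
    (M n : ℕ)
    (lam : Fin M → ℝ)
    (Φ : Matrix (Fin M) (Fin n) ℝ)
    (ξ : Fin M → ℝ)
    (sqrtΛ invsqrtΛ : Matrix (Fin M) (Fin M) ℝ)
    (hs : sqrtΛ = Matrix.diagonal fun k => Real.sqrt (lam k))
    (his : invsqrtΛ = Matrix.diagonal fun k => (Real.sqrt (lam k))⁻¹)
    (A A' G G' : Matrix (Fin M) (Fin M) ℝ)
    (hA : A = sqrtΛ * (Φ * Φᵀ) * sqrtΛ)
    (hA' : A' = sqrtΛ * (Φ * Φᵀ + Matrix.vecMulVec ξ ξ) * sqrtΛ)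
    (hG : IsMoorePenroseInv A G)
    (hG' : IsMoorePenroseInv A' G')
    (i : Fin M) :
    (sqrtΛ * A * G * invsqrtΛ) i i ≤ (sqrtΛ * A' * G' * invsqrtΛ) i i := by
  have hsqrtΛ : sqrtΛᴴ = sqrtΛ := by simp [hs]
  have hA_nonneg : 0 ≤ A := by
    have := (posSemidef_self_mul_conjTranspose Φ).mul_mul_conjTranspose_same sqrtΛ
    rw [hsqrtΛ, conjTranspose_eq_transpose_of_trivial, ← hA] at this
    exact this.nonneg
  have hAA' : A ≤ A' := by
    have := (posSemidef_vecMulVec_self_star ξ).mul_mul_conjTranspose_same sqrtΛ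
    rw [hsqrtΛ, star_trivial] at this
    rwa [le_iff, hA, hA', mul_add, add_mul, add_sub_cancel_left]
  have hproj : IsStarProjection (A' * G' - A * G) :=
    hG.isStarProjection_mul.sub_of_mul_eq_right hG'.isStarProjection_mul
      (by rw [← mul_assoc, hG'.mul_mul_eq_of_le hA_nonneg hAA'])
  have hdiag := diag_nonneg_of_isStarProjection hproj i
  rw [Matrix.sub_apply, sub_nonneg] at hdiag
  rw [mul_assoc sqrtΛ A, mul_assoc sqrtΛ A', hs, his, diagonal_mul_mul_diagonal_apply,
    diagonal_mul_mul_diagonal_apply]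
  gcongr

theorem learnability_monotone_in_data
    (M n : ℕ)
    (lam : Fin M → ℝ) (hpos : ∀ k, 0 < lam k)
    (Φ : Matrix (Fin M) (Fin n) ℝ)
    (horth : ∀ a b : Fin n, a ≠ b → (Φᵀ * Φ) a b = 0)
    (ξ : Fin M → ℝ) (hξ : ξ ≠ 0)
    (hξΦ : Φᵀ *ᵥ ξ = 0)
    (sqrtΛ invsqrtΛ : Matrix (Fin M) (Fin M) ℝ)
    (hs : sqrtΛ = Matrix.diagonal fun k => Real.sqrt (lam k))
    (his : invsqrtΛ = Matrix.diagonal fun k => (Real.sqrt (lam k))⁻¹)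
    (A A' G G' : Matrix (Fin M) (Fin M) ℝ)
    (hA : A = sqrtΛ * (Φ * Φᵀ) * sqrtΛ)
    (hA' : A' = sqrtΛ * (Φ * Φᵀ + Matrix.vecMulVec ξ ξ) * sqrtΛ)
    (hG : IsMoorePenroseInv A G)
    (hG' : IsMoorePenroseInv A' G')
    (i : Fin M) :
    (sqrtΛ * A * G * invsqrtΛ) i i ≤ (sqrtΛ * A' * G' * invsqrtΛ) i i :=
  learnability_monotone_in_data_general M n lam Φ ξ sqrtΛ invsqrtΛ hs his A A' G G' hA hA' hG hG' i
end

section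
/- For a positive semidefinite matrix A, the matrix A A⁺ (with A⁺ the Moore–Penrose pseudoinverse) is the orthogonal projection onto the column space of A, and hence for any vector v, vᵀ (A + ξξᵀ)(A + ξξᵀ)⁺ v ≥ vᵀ A A⁺ v for any vector ξ. -/
open Matrix

lemma vecMulVec_psd {M : ℕ} (ξ : Fin M → ℝ) : (Matrix.vecMulVec ξ ξ).PosSemidef := by
  rw [Matrix.posSemidef_iff_dotProduct_mulVec]
  constructor
  · ext i j
    simp [Matrix.vecMulVec_apply, mul_comm, Matrix.conjTranspose_apply]
  · intro x
    have : (Matrix.vecMulVec ξ ξ) *ᵥ x = fun i => ξ i * (ξ ⬝ᵥ x) := by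
      ext i
      simp [Matrix.mulVec, Matrix.vecMulVec_apply, dotProduct,
        Finset.mul_sum, mul_assoc]
    rw [this]
    have : (star x) ⬝ᵥ (fun i => ξ i * (ξ ⬝ᵥ x)) = (ξ ⬝ᵥ x) * (ξ ⬝ᵥ x) := by
      simp [dotProduct, Finset.sum_mul, mul_comm, mul_assoc, mul_left_comm]
    rw [this]
    exact mul_self_nonneg _

theorem psd_pseudoinverse_projection_monotone
    (M : ℕ)
    (A : Matrix (Fin M) (Fin M) ℝ) (hA : A.PosSemidef)
    (G : Matrix (Fin M) (Fin M) ℝ) (hG : IsMoorePenroseInv A G)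
    (ξ : Fin M → ℝ)
    (G' : Matrix (Fin M) (Fin M) ℝ)
    (hG' : IsMoorePenroseInv (A + Matrix.vecMulVec ξ ξ) G') :
    ((A * G) * (A * G) = A * G ∧ (A * G)ᵀ = A * G ∧
      ∀ w : Fin M → ℝ, (∃ u, w = A *ᵥ u) → (A * G) *ᵥ w = w) ∧
    ∀ v : Fin M → ℝ,
      v ⬝ᵥ (A *ᵥ (G *ᵥ v)) ≤
        v ⬝ᵥ ((A + Matrix.vecMulVec ξ ξ) *ᵥ (G' *ᵥ v)) := by
  obtain ⟨hAGA, hGAG, hAGsym, hGAsym⟩ := hG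
  set A' := A + Matrix.vecMulVec ξ ξ with hA'def
  obtain ⟨hAGA', hGAG', hAGsym', hGAsym'⟩ := hG'
  have hξ := vecMulVec_psd ξ
  have hA' : A'.PosSemidef := hA.add hξ
  set P := A * G with hP
  set Q := A' * G' with hQ
  have hAsymm : Aᵀ = A := by
    ext i j; simpa using congrFun (congrFun hA.isHermitian.eq i) j
  have hA'symm : A'ᵀ = A' := by
    ext i j; simpa using congrFun (congrFun hA'.isHermitian.eq i) j
  have hPidem : P * P = P := by
    rw [hP, Matrix.mul_assoc, ← Matrix.mul_assoc G A G, hGAG]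
  have hQidem : Q * Q = Q := by
    rw [hQ, Matrix.mul_assoc, ← Matrix.mul_assoc G' A' G', hGAG']
  -- Q * A' = A'
  have hQA' : Q * A' = A' := hAGA'
  -- A' * Q = A'
  have hA'Q : A' * Q = A' := by
    have := congrArg Matrix.transpose hQA'
    rwa [Matrix.transpose_mul, hAGsym', hA'symm] at this
  -- A * Q = A : for all x, A *ᵥ (x - Q *ᵥ x) = 0
  have hAQ : A * Q = A := by
    have key : ∀ x : Fin M → ℝ, A *ᵥ (Q *ᵥ x) = A *ᵥ x := by
      intro x
      set r := x - Q *ᵥ x with hr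
      have hA'r : A' *ᵥ r = 0 := by
        rw [hr, Matrix.mulVec_sub, Matrix.mulVec_mulVec, hA'Q, sub_self]
      have hquad : r ⬝ᵥ (A *ᵥ r) + r ⬝ᵥ (Matrix.vecMulVec ξ ξ *ᵥ r) = 0 := by
        have : r ⬝ᵥ (A' *ᵥ r) = 0 := by rw [hA'r, dotProduct_zero]
        rw [hA'def, Matrix.add_mulVec, dotProduct_add] at this
        exact this
      have h1 : (0:ℝ) ≤ r ⬝ᵥ (A *ᵥ r) := hA.dotProduct_mulVec_nonneg r
      have h2 : (0:ℝ) ≤ r ⬝ᵥ (Matrix.vecMulVec ξ ξ *ᵥ r) := hξ.dotProduct_mulVec_nonneg r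
      have hAr0 : r ⬝ᵥ (A *ᵥ r) = 0 := by linarith
      have : A *ᵥ r = 0 := (hA.dotProduct_mulVec_zero_iff r).mp hAr0
      rw [hr, Matrix.mulVec_sub, sub_eq_zero] at this
      rw [Matrix.mulVec_mulVec] at this ⊢
      exact this.symm
    ext i j
    have := congrFun (key (Pi.single j 1)) i
    rw [Matrix.mulVec_mulVec] at this
    simpa [Matrix.mulVec, dotProduct, Pi.single_apply, mul_ite,
      Finset.sum_ite_eq'] using this
  have hQA : Q * A = A := by
    have := congrArg Matrix.transpose hAQ
    rwa [Matrix.transpose_mul, hAGsym', hAsymm] at this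
  refine ⟨⟨hPidem, hAGsym, ?_⟩, ?_⟩
  · rintro w ⟨u, rfl⟩
    rw [Matrix.mulVec_mulVec, hAGA]
  · intro v
    -- S := Q - P is symmetric idempotent
    have hQP : Q * P = P := by rw [hP, ← Matrix.mul_assoc, hQA]
    have hPQ : P * Q = P := by
      have := congrArg Matrix.transpose hQP
      rwa [Matrix.transpose_mul, hAGsym, hAGsym'] at this
    set S := Q - P with hS
    have hSsym : Sᵀ = S := by rw [hS, Matrix.transpose_sub, hAGsym, hAGsym']
    have hSidem : S * S = S := by
      rw [hS]
      rw [Matrix.sub_mul, Matrix.mul_sub, Matrix.mul_sub, hQidem, hPidem, hQP, hPQ]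
      abel
    have hSH : Sᴴ = S := by
      ext i j; simpa using congrFun (congrFun hSsym i) j
    have key : (0:ℝ) ≤ v ⬝ᵥ (S *ᵥ v) := by
      have h := (Matrix.posSemidef_conjTranspose_mul_self S).dotProduct_mulVec_nonneg v
      rwa [hSH, hSidem, star_trivial] at h
    have expand : v ⬝ᵥ (S *ᵥ v) =
        v ⬝ᵥ (A' *ᵥ (G' *ᵥ v)) - v ⬝ᵥ (A *ᵥ (G *ᵥ v)) := by
      rw [hS, Matrix.sub_mulVec, dotProduct_sub, hQ, hP,
        ← Matrix.mulVec_mulVec, ← Matrix.mulVec_mulVec]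
    rw [expand] at key
    linarith
end

section
/- The ridge parameter is equivalent to an eigenvalue shift: if Φ is an M×n real matrix with ΦᵀΦ = M·I_n, then Λ Φ (ΦᵀΛΦ + δI_n)⁻¹ Φᵀ = Λ (Λ + (δ/M) I_M)⁻¹ · (Λ + (δ/M) I_M) Φ (Φᵀ(Λ + (δ/M) I_M)Φ)⁻¹ Φᵀ. -/
/-!
Because `Φᵀ * Φ = M • 1`, shifting `Λ` by `(δ / M) • 1` inside the Gram matrix `Φᵀ * Λ * Φ` adds
exactly `δ • 1`. Hence the two inverted `n × n` matrices coincide, and the right-hand side collapses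
to the left-hand side once `A⁻¹ * A` cancels, where `A = Λ + (δ / M) • 1`.
-/

open Matrix

namespace Matrix

variable {R : Type*} [CommRing R] {l m n : Type*} [Fintype m] [DecidableEq m]

theorem mul_add_smul_one_mul (P : Matrix l m R) (D : Matrix m m R) (Q : Matrix m n R) (c : R) :
    P * (D + c • 1) * Q = P * D * Q + c • (P * Q) := by
  rw [Matrix.mul_add, Matrix.add_mul, Matrix.mul_smul, Matrix.mul_one, Matrix.smul_mul]

theorem transpose_mul_add_smul_one_mul_of_transpose_mul_self {K : Type*} [Field K] [Fintype n]
    [DecidableEq n] {Φ : Matrix m n K} {M : K} (hM : M ≠ 0) (horth : Φᵀ * Φ = M • 1)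
    (D : Matrix m m K) (δ : K) :
    Φᵀ * (D + (δ / M) • 1) * Φ = Φᵀ * D * Φ + δ • 1 := by
  rw [mul_add_smul_one_mul, horth, smul_smul, div_mul_cancel₀ δ hM]

end Matrix

theorem ridge_as_eigenvalue_shift_general
    (M n : ℕ) (hM : 0 < M)
    (lam : Fin M → ℝ)
    (δ : ℝ)
    (Φ : Matrix (Fin M) (Fin n) ℝ)
    (horth : Φᵀ * Φ = (M : ℝ) • (1 : Matrix (Fin n) (Fin n) ℝ))
    (hinv3 : IsUnit (Matrix.diagonal lam + (δ / M) • (1 : Matrix (Fin M) (Fin M) ℝ))) :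
    Matrix.diagonal lam * Φ *
        (Φᵀ * Matrix.diagonal lam * Φ + δ • (1 : Matrix (Fin n) (Fin n) ℝ))⁻¹ * Φᵀ
      = (Matrix.diagonal lam *
          (Matrix.diagonal lam + (δ / M) • (1 : Matrix (Fin M) (Fin M) ℝ))⁻¹) *
        ((Matrix.diagonal lam + (δ / M) • (1 : Matrix (Fin M) (Fin M) ℝ)) * Φ *
          (Φᵀ * (Matrix.diagonal lam + (δ / M) • (1 : Matrix (Fin M) (Fin M) ℝ)) * Φ)⁻¹ * Φᵀ) := by
  have hdet := (isUnit_iff_isUnit_det _).mp hinv3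
  rw [transpose_mul_add_smul_one_mul_of_transpose_mul_self (Nat.cast_ne_zero.mpr hM.ne') horth]
  simp only [Matrix.mul_assoc, nonsing_inv_mul_cancel_left _ _ hdet]

theorem ridge_as_eigenvalue_shift
    (M n : ℕ) (hM : 0 < M)
    (lam : Fin M → ℝ) (hpos : ∀ k, 0 < lam k)
    (δ : ℝ) (hδ : 0 < δ)
    (Φ : Matrix (Fin M) (Fin n) ℝ)
    (horth : Φᵀ * Φ = (M : ℝ) • (1 : Matrix (Fin n) (Fin n) ℝ))
    (hinv1 : IsUnit (Φᵀ * Matrix.diagonal lam * Φ + δ • (1 : Matrix (Fin n) (Fin n) ℝ)))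
    (hinv2 : IsUnit (Φᵀ * (Matrix.diagonal lam + (δ / M) • (1 : Matrix (Fin M) (Fin M) ℝ)) * Φ))
    (hinv3 : IsUnit (Matrix.diagonal lam + (δ / M) • (1 : Matrix (Fin M) (Fin M) ℝ))) :
    Matrix.diagonal lam * Φ *
        (Φᵀ * Matrix.diagonal lam * Φ + δ • (1 : Matrix (Fin n) (Fin n) ℝ))⁻¹ * Φᵀ
      = (Matrix.diagonal lam *
          (Matrix.diagonal lam + (δ / M) • (1 : Matrix (Fin M) (Fin M) ℝ))⁻¹) *
        ((Matrix.diagonal lam + (δ / M) • (1 : Matrix (Fin M) (Fin M) ℝ)) * Φ *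
          (Φᵀ * (Matrix.diagonal lam + (δ / M) • (1 : Matrix (Fin M) (Fin M) ℝ)) * Φ)⁻¹ * Φᵀ) :=
  ridge_as_eigenvalue_shift_general M n hM lam δ Φ horth hinv3
end

section
/- Sherman–Morrison applied to the transfer matrix: λᵢ φᵢᵀ (ΦᵀΛΦ)⁻¹ φᵢ − λᵢ² [φᵢᵀ (Φ₍ᵢ₎ᵀ Λ₍ᵢ₎ Φ₍ᵢ₎)⁻¹ φᵢ]² / (1 + λᵢ φᵢᵀ (Φ₍ᵢ₎ᵀ Λ₍ᵢ₎ Φ₍ᵢ₎)⁻¹ φᵢ) simplifies so that T_{ii} = λᵢ / (λᵢ + cᵢ), where cᵢ = [φᵢᵀ (Φ₍ᵢ₎ᵀ Λ₍ᵢ₎ Φ₍ᵢ₎)⁻¹ φᵢ]⁻¹. -/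
open Matrix

theorem transfer_matrix_diag_sherman_morrison
    (m n : ℕ)
    (lam : Fin (m + 1) → ℝ) (hpos : ∀ k, 0 < lam k)
    (Φ : Matrix (Fin (m + 1)) (Fin n) ℝ)
    (i : Fin (m + 1)) :
    let Φi : Matrix (Fin m) (Fin n) ℝ := Φ.submatrix i.succAbove id
    let Λi : Matrix (Fin m) (Fin m) ℝ :=
      (Matrix.diagonal lam).submatrix i.succAbove i.succAbove
    ∀ (hBinv : IsUnit (Φiᵀ * Λi * Φi))
      (hKinv : IsUnit (Φᵀ * Matrix.diagonal lam * Φ))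
      (hcpos : 0 < Φ i ⬝ᵥ ((Φiᵀ * Λi * Φi)⁻¹ *ᵥ Φ i)),
    (Matrix.diagonal lam * Φ * (Φᵀ * Matrix.diagonal lam * Φ)⁻¹ * Φᵀ) i i
      = lam i / (lam i + (Φ i ⬝ᵥ ((Φiᵀ * Λi * Φi)⁻¹ *ᵥ Φ i))⁻¹) := by
  intro Φi Λi hBinv hKinv hcpos
  set u : Fin n → ℝ := Φ i with hu
  set B : Matrix (Fin n) (Fin n) ℝ := Φiᵀ * Λi * Φi with hB
  set K : Matrix (Fin n) (Fin n) ℝ := Φᵀ * Matrix.diagonal lam * Φ with hK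
  set q : ℝ := u ⬝ᵥ (B⁻¹ *ᵥ u) with hq
  have hlami : 0 < lam i := hpos i
  have hqpos : 0 < q := hcpos
  have hden : 0 < 1 + lam i * q := by positivity
  have hBdet : IsUnit B.det := (Matrix.isUnit_iff_isUnit_det B).mp hBinv
  have hKdet : IsUnit K.det := (Matrix.isUnit_iff_isUnit_det K).mp hKinv
  have hΛi : Λi = Matrix.diagonal (lam ∘ i.succAbove) :=
    Matrix.submatrix_diagonal lam i.succAbove (Fin.succAbove_right_injective)
  -- decomposition K = B + λᵢ • (u uᵀ)
  have hdecomp : K = B + lam i • vecMulVec u u := by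
    ext a b
    have hKab : K a b = ∑ k : Fin (m+1), Φ k a * lam k * Φ k b := by
      rw [hK, Matrix.mul_apply]
      congr 1
      ext k
      rw [Matrix.mul_diagonal]
      simp [Matrix.transpose_apply]
    have hBab : B a b = ∑ j : Fin m, Φ (i.succAbove j) a * lam (i.succAbove j)
        * Φ (i.succAbove j) b := by
      rw [hB, hΛi, Matrix.mul_apply]
      congr 1
      ext j
      rw [Matrix.mul_diagonal]
      simp [Matrix.transpose_apply, Φi]
    rw [hKab, Fin.sum_univ_succAbove (fun k => Φ k a * lam k * Φ k b) i]
    rw [Matrix.add_apply, hBab, Matrix.smul_apply, Matrix.vecMulVec_apply]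
    simp [hu, smul_eq_mul]
    ring
  -- K⁻¹ *ᵥ u = (1 + λ q)⁻¹ • (B⁻¹ *ᵥ u)
  have houter : ∀ w : Fin n → ℝ, vecMulVec u u *ᵥ w = (u ⬝ᵥ w) • u := by
    intro w
    ext j
    simp [Matrix.mulVec, Matrix.vecMulVec_apply, dotProduct, Finset.mul_sum,
      Pi.smul_apply, smul_eq_mul, mul_assoc]
    rw [Finset.sum_mul]
    exact Finset.sum_congr rfl fun x _ => by ring
  have hKv : K *ᵥ ((1 + lam i * q)⁻¹ • (B⁻¹ *ᵥ u)) = u := by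
    rw [Matrix.mulVec_smul, hdecomp, Matrix.add_mulVec, Matrix.smul_mulVec,
      Matrix.mulVec_mulVec, Matrix.mul_nonsing_inv B hBdet, Matrix.one_mulVec,
      houter, ← hq]
    ext j
    simp [smul_eq_mul]
    field_simp
  have hKu : K⁻¹ *ᵥ u = (1 + lam i * q)⁻¹ • (B⁻¹ *ᵥ u) := by
    conv_lhs => rw [← hKv, Matrix.mulVec_mulVec, Matrix.nonsing_inv_mul K hKdet,
      Matrix.one_mulVec]
  -- compute the (i,i) entry
  have hTii : (Matrix.diagonal lam * Φ * K⁻¹ * Φᵀ) i i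
      = lam i * (u ⬝ᵥ (K⁻¹ *ᵥ u)) := by
    simp only [Matrix.mul_apply, Matrix.diagonal_mul, Matrix.transpose_apply,
      dotProduct, Matrix.mulVec, Finset.mul_sum, Finset.sum_mul]
    rw [Finset.sum_comm]
    exact Finset.sum_congr rfl fun k _ => Finset.sum_congr rfl fun j _ => by
      simp [Matrix.diagonal_apply, ite_mul, zero_mul, Finset.sum_ite_eq, hu]
      ring
  rw [hTii, hKu]
  have : u ⬝ᵥ ((1 + lam i * q)⁻¹ • (B⁻¹ *ᵥ u)) = (1 + lam i * q)⁻¹ * q := by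
    rw [dotProduct_smul, ← hq]
    simp [smul_eq_mul]
  rw [this]
  field_simp
  ring
end

section
/- If C > 0 satisfies Σ_{i=1}^M λᵢ/(λᵢ + C) + δ/C = n with 0 ≤ ℓ < n, then C ≤ (δ + Σ_{i=ℓ+1}^M λᵢ)/(n − ℓ). -/
theorem self_consistency_upper_bound
    (M : ℕ)
    (lam : Fin M → ℝ) (hpos : ∀ i, 0 < lam i)
    (hord : ∀ i j : Fin M, i ≤ j → lam j ≤ lam i)
    (δ : ℝ) (hδ : 0 ≤ δ)
    (n ℓ : ℕ) (hℓ : ℓ < n)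
    (C : ℝ) (hC : 0 < C)
    (heq : (∑ i, lam i / (lam i + C)) + δ / C = n) :
    C ≤ (δ + ∑ i ∈ Finset.univ.filter fun i : Fin M => ℓ ≤ (i : ℕ), lam i)
          / ((n : ℝ) - ℓ) := by
  set A := Finset.univ.filter fun i : Fin M => ℓ ≤ (i : ℕ) with hA
  set B := Finset.univ.filter fun i : Fin M => ¬ ℓ ≤ (i : ℕ) with hB
  have hdenC : ∀ i, 0 < lam i + C := fun i => by have := hpos i; linarith
  have hsplit : (∑ i, lam i / (lam i + C))
      = (∑ i ∈ A, lam i / (lam i + C)) + (∑ i ∈ B, lam i / (lam i + C)) := by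
    rw [hA, hB, Finset.sum_filter_add_sum_filter_not]
  have hAle : (∑ i ∈ A, lam i / (lam i + C)) ≤ (∑ i ∈ A, lam i) / C := by
    rw [Finset.sum_div]
    refine Finset.sum_le_sum fun i _ => ?_
    exact div_le_div_of_nonneg_left (hpos i).le hC (by linarith [hpos i])
  have hBle : (∑ i ∈ B, lam i / (lam i + C)) ≤ (ℓ : ℝ) := by
    have h1 : (∑ i ∈ B, lam i / (lam i + C)) ≤ ∑ _i ∈ B, (1 : ℝ) := by
      refine Finset.sum_le_sum fun i _ => ?_
      rw [div_le_one (hdenC i)]; linarith [hpos i]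
    have hcard : (B.card : ℝ) ≤ (ℓ : ℝ) := by
      have : B.card ≤ ℓ := by
        have : B ⊆ (Finset.univ.filter fun i : Fin M => (i : ℕ) < ℓ) := by
          intro i hi
          simp only [hB, Finset.mem_filter, not_le] at hi ⊢
          exact ⟨Finset.mem_univ i, hi.2⟩
        calc B.card ≤ _ := Finset.card_le_card this
          _ ≤ (Finset.range ℓ).card := by
              apply Finset.card_le_card_of_injOn (fun i : Fin M => (i : ℕ))
              · intro i hi
                simp only [Finset.mem_coe, Finset.mem_filter] at hi
                exact Finset.mem_range.mpr hi.2
              · intro a _ b _ h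
                exact Fin.ext h
          _ = ℓ := Finset.card_range ℓ
      exact_mod_cast this
    simpa using h1.trans (by simpa using hcard)
  have hnℓ : (0:ℝ) < (n : ℝ) - ℓ := by
    have : (ℓ:ℝ) < n := by exact_mod_cast hℓ
    linarith
  have key : ((n:ℝ) - ℓ) * C ≤ δ + ∑ i ∈ A, lam i := by
    have : (n : ℝ) ≤ (ℓ : ℝ) + (δ + ∑ i ∈ A, lam i) / C := by
      rw [← heq, hsplit, add_div]
      linarith
    have h2 : ((n:ℝ) - ℓ) ≤ (δ + ∑ i ∈ A, lam i) / C := by linarith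
    calc ((n:ℝ) - ℓ) * C ≤ ((δ + ∑ i ∈ A, lam i) / C) * C := by
          exact mul_le_mul_of_nonneg_right h2 hC.le
      _ = δ + ∑ i ∈ A, lam i := by field_simp
  rw [le_div_iff₀ hnℓ]
  linarith [key]
end

section
/- If C > 0 satisfies Σ_{i=1}^M λᵢ/(λᵢ + C) = n (the ridgeless case δ = 0) and n ≤ ℓ ≤ M, then C ≥ λ_ℓ (ℓ/n − 1). -/
theorem self_consistency_lower_bound
    (M : ℕ)
    (lam : Fin M → ℝ) (hpos : ∀ i, 0 < lam i)
    (hord : ∀ i j : Fin M, i ≤ j → lam j ≤ lam i)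
    (n : ℕ) (hn : 0 < n)
    (ℓ : Fin M) (hℓ : n ≤ (ℓ : ℕ) + 1)
    (C : ℝ) (hC : 0 < C)
    (heq : ∑ i, lam i / (lam i + C) = n) :
    lam ℓ * (((ℓ : ℕ) + 1 : ℝ) / n - 1) ≤ C := by
  have hden : ∀ i : Fin M, 0 < lam i + C := fun i => by
    have := hpos i; linarith
  have hkey : ((ℓ : ℕ) + 1 : ℝ) * (lam ℓ / (lam ℓ + C)) ≤ n := by
    have h1 : ∑ i ∈ Finset.Iic ℓ, (lam ℓ / (lam ℓ + C)) ≤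
        ∑ i ∈ Finset.Iic ℓ, lam i / (lam i + C) := by
      apply Finset.sum_le_sum
      intro i hi
      have hle : lam ℓ ≤ lam i := hord i ℓ (Finset.mem_Iic.mp hi)
      rw [div_le_div_iff₀ (hden ℓ) (hden i)]
      nlinarith
    have h2 : ∑ i ∈ Finset.Iic ℓ, lam i / (lam i + C) ≤
        ∑ i, lam i / (lam i + C) := by
      apply Finset.sum_le_sum_of_subset_of_nonneg (Finset.subset_univ _)
      intro i _ _
      exact le_of_lt (div_pos (hpos i) (hden i))
    have hcard : (Finset.Iic ℓ).card = (ℓ : ℕ) + 1 := by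
      simp
    rw [Finset.sum_const, hcard, nsmul_eq_mul] at h1
    push_cast at h1
    linarith [h1, h2, heq.le, heq.ge]
  have hnpos : (0 : ℝ) < n := by exact_mod_cast hn
  have h3 : ((ℓ : ℕ) + 1 : ℝ) * lam ℓ ≤ n * (lam ℓ + C) := by
    rw [← mul_div_assoc, div_le_iff₀ (hden ℓ)] at hkey
    linarith
  have hrw : lam ℓ * (((ℓ : ℕ) + 1 : ℝ) / n - 1)
      = (((ℓ : ℕ) + 1 : ℝ) * lam ℓ - n * lam ℓ) / n := by
    field_simp
  rw [hrw, div_le_iff₀ hnpos]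
  nlinarith
end
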